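/- Let p_{i,j} (1 ≤ i,j ≤ g) be complex numbers with p_{i,j} = p_{j,i}, and set E(e_1,e_2) = (e_1−e_2)·(f(e_1,e_2) − (e_1−e_2)² Σ_{i,j=1}^g p_{i,j} e_1^{i−1} e_2^{j−1}) and Ẽ(e_1,e_2,e_3,e_4) = E(e_2,e_3)E(e_4,e_1) + E(e_3,e_1)E(e_4,e_2) + E(e_1,e_2)E(e_4,e_3). Then the polynomial Ẽ is divisible in ℂ[e_1,e_2,e_3,e_4] by (e_2−e_1)(e_3−e_2)(e_3−e_1)(e_4−e_3)(e_4−e_2)(e_4−e_1), and the quotient Ẽ/((e_2−e_1)(e_3−e_2)(e_3−e_1)(e_4−e_3)(e_4−e_2)(e_4−e_1)) is a symmetric polynomial in the four variables e_1, e_2, e_3, e_4. -/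

import Mathlib

/-!
Since `f(e₁,e₂)` and `Σ p_{ij} e₁^{i-1} e₂^{j-1}` are symmetric in `e₁, e₂`, `E` is antisymmetric,
and then `Ẽ` changes sign under every transposition of the variables. Over a domain of
characteristic `≠ 2`, such an alternating polynomial vanishes on each diagonal `e_i = e_j`, hence
is divisible by every `e_j - e_i` and, inductively, by the Vandermonde product. The Vandermonde
product is itself alternating and nonzero, so the quotient is fixed by every transposition, i.e.
symmetric.
-/

open MvPolynomial

/-- `f(e_u,e_v)` as a polynomial in the four variables `e₁,e₂,e₃,e₄`. -/
noncomputable def fp4 (g : ℕ) (ν : ℤ → ℂ) (u v : Fin 4) : MvPolynomial (Fin 4) ℂ :=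
  ∑ i ∈ Finset.range (g+2), (X u)^i * (X v)^i *
    (C (2 * ν (4*(g:ℤ)+4-4*(i:ℤ))) + C (ν (4*(g:ℤ)+2-4*(i:ℤ))) * (X u + X v))

/-- `E(e_u,e_v) = (e_u-e_v)(f(e_u,e_v) - (e_u-e_v)² Σ p_{ij} e_u^{i-1} e_v^{j-1})`. -/
noncomputable def Ep (g : ℕ) (ν : ℤ → ℂ) (p : Fin g → Fin g → ℂ) (u v : Fin 4) :
    MvPolynomial (Fin 4) ℂ :=
  (X u - X v) * (fp4 g ν u v -
    (X u - X v)^2 * ∑ i : Fin g, ∑ j : Fin g, C (p i j) * (X u)^(i:ℕ) * (X v)^(j:ℕ))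

namespace MvPolynomial

variable {σ R : Type*} [CommRing R]

section DecidableEq

variable [DecidableEq σ]

def IsAlternating (P : MvPolynomial σ R) : Prop :=
  ∀ ⦃i j : σ⦄, i ≠ j → rename (Equiv.swap i j) P = -P

theorem X_sub_X_dvd_sub_rename_update (i j : σ) (P : MvPolynomial σ R) :
    X i - X j ∣ P - rename (Function.update id i j) P := by
  set I := Ideal.span {(X i - X j : MvPolynomial σ R)}
  have hI : (Ideal.Quotient.mkₐ R I).comp (rename (Function.update id i j)) =
      Ideal.Quotient.mkₐ R I := by
    ext k
    by_cases hk : k = i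
    · subst hk
      simpa [Ideal.Quotient.eq, I, Ideal.mem_span_singleton] using dvd_sub_comm.mpr dvd_rfl
    · simp [hk]
  rw [← Ideal.mem_span_singleton, ← Ideal.Quotient.eq]
  exact (DFunLike.congr_fun hI P).symm

theorem X_sub_X_dvd_of_rename_update_eq_zero {i j : σ} {P : MvPolynomial σ R}
    (h : rename (Function.update id i j) P = 0) : X i - X j ∣ P := by
  simpa [h] using X_sub_X_dvd_sub_rename_update i j P

theorem IsAlternating.rename_update_eq_zero [IsDomain R] [NeZero (2 : R)]
    {P : MvPolynomial σ R} (hP : P.IsAlternating) {i j : σ} (hij : i ≠ j) :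
    rename (Function.update id i j) P = 0 := by
  have hcomp : Function.update id i j ∘ Equiv.swap i j = Function.update id i j := by
    ext k
    grind [Function.update_apply]
  have h2 : (2 : MvPolynomial σ R) * rename (Function.update id i j) P = 0 := by
    have := congrArg (rename (Function.update id i j)) (hP hij)
    rw [rename_rename, hcomp, map_neg] at this
    linear_combination this
  have h2ne : (2 : MvPolynomial σ R) ≠ 0 := by
    rw [← map_ofNat C 2]
    exact C_ne_zero.mpr two_ne_zero
  exact (mul_eq_zero.mp h2).resolve_left h2ne

theorem IsAlternating.prod_X_sub_X_dvd [IsDomain R] [NeZero (2 : R)] [LinearOrder σ]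
    {P : MvPolynomial σ R} (hP : P.IsAlternating) (s : Finset (σ × σ))
    (hs : ∀ a ∈ s, a.1 < a.2) : ∏ a ∈ s, (X a.2 - X a.1) ∣ P := by
  induction s using Finset.induction_on with
  | empty => simp
  | insert a s has ih =>
    obtain ⟨Q, rfl⟩ := ih fun b hb => hs b (Finset.mem_insert_of_mem hb)
    rw [Finset.prod_insert has, mul_comm]
    refine mul_dvd_mul_left _ (X_sub_X_dvd_of_rename_update_eq_zero ?_)
    have ha := hs a (Finset.mem_insert_self a s)
    set r := Function.update id a.2 a.1
    -- `r` identifies only `a.1` and `a.2`, so it kills `P` but none of the factors indexed by `s`.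
    have hne : rename r (∏ b ∈ s, (X b.2 - X b.1) : MvPolynomial σ R) ≠ 0 := by
      simp only [map_prod, map_sub, rename_X]
      refine Finset.prod_ne_zero_iff.mpr fun b hb => sub_ne_zero.mpr fun h => ?_
      have hb' := hs b (Finset.mem_insert_of_mem hb)
      grind [X_injective h, Function.update_apply]
    have h0 : rename r (∏ b ∈ s, (X b.2 - X b.1) : MvPolynomial σ R) * rename r Q = 0 := by
      rw [← map_mul]; exact hP.rename_update_eq_zero ha.ne'
    exact (mul_eq_zero.mp h0).resolve_left hne

end DecidableEq

theorem isAlternating_det_vandermonde (n : ℕ) :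
    IsAlternating (Matrix.vandermonde (X : Fin n → MvPolynomial (Fin n) R)).det := by
  intro i j hij
  rw [AlgHom.map_det]
  have hswap : (rename (Equiv.swap i j)).mapMatrix
      (Matrix.vandermonde (X : Fin n → MvPolynomial (Fin n) R)) =
        (Matrix.vandermonde X).submatrix (Equiv.swap i j) id := by
    ext a b; simp [Matrix.vandermonde_apply]
  rw [hswap, Matrix.det_permute, Equiv.Perm.sign_swap hij]
  simp

theorem IsAlternating.det_vandermonde_dvd [IsDomain R] [NeZero (2 : R)] {n : ℕ}
    {P : MvPolynomial (Fin n) R} (hP : P.IsAlternating) :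
    (Matrix.vandermonde (X : Fin n → MvPolynomial (Fin n) R)).det ∣ P := by
  rw [Matrix.det_vandermonde,
    ← Finset.prod_finset_product' (Finset.univ.filter fun a => a.1 < a.2)]
  · exact hP.prod_X_sub_X_dvd _ (by simp)
  · simp

theorem IsAlternating.isSymmetric_of_mul [DecidableEq σ] [Finite σ] [IsDomain R]
    {V Q : MvPolynomial σ R} (hV : V.IsAlternating) (hV0 : V ≠ 0)
    (hVQ : (V * Q).IsAlternating) : Q.IsSymmetric := by
  have hswap : ∀ ⦃i j⦄, i ≠ j → rename (Equiv.swap i j) Q = Q := fun i j hij =>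
    mul_left_cancel₀ hV0 <| by simpa [hV hij] using hVQ hij
  intro π
  induction π using Equiv.Perm.swap_induction_on with
  | one => simp
  | swap_mul π i j hij ih => rw [Equiv.Perm.coe_mul, ← rename_rename, ih, hswap hij]

end MvPolynomial

lemma fp4_comm (g : ℕ) (ν : ℤ → ℂ) (u v : Fin 4) : fp4 g ν u v = fp4 g ν v u :=
  Finset.sum_congr rfl fun i _ => by ring

lemma Ep_antisymm (g : ℕ) (ν : ℤ → ℂ) {p : Fin g → Fin g → ℂ} (hp : ∀ i j, p i j = p j i)
    (u v : Fin 4) : Ep g ν p u v = -Ep g ν p v u := by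
  have hsum : ∑ i : Fin g, ∑ j : Fin g, C (p i j) * (X u) ^ (i : ℕ) * (X v) ^ (j : ℕ) =
      ∑ i : Fin g, ∑ j : Fin g, (C (p i j) * (X v) ^ (i : ℕ) * (X u) ^ (j : ℕ) :
        MvPolynomial (Fin 4) ℂ) := by
    rw [Finset.sum_comm]
    exact Finset.sum_congr rfl fun i _ => Finset.sum_congr rfl fun j _ => by rw [hp j i]; ring
  rw [Ep, Ep, fp4_comm, hsum]
  ring

lemma rename_Ep (g : ℕ) (ν : ℤ → ℂ) (p : Fin g → Fin g → ℂ) (π : Fin 4 → Fin 4) (u v : Fin 4) :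
    rename π (Ep g ν p u v) = Ep g ν p (π u) (π v) := by
  simp [Ep, fp4]

noncomputable def Etilde (g : ℕ) (ν : ℤ → ℂ) (p : Fin g → Fin g → ℂ) :
    MvPolynomial (Fin 4) ℂ :=
  Ep g ν p 1 2 * Ep g ν p 3 0 + Ep g ν p 2 0 * Ep g ν p 3 1 + Ep g ν p 0 1 * Ep g ν p 3 2

lemma isAlternating_Etilde (g : ℕ) (ν : ℤ → ℂ) {p : Fin g → Fin g → ℂ}
    (hp : ∀ i j, p i j = p j i) : (Etilde g ν p).IsAlternating := by
  -- Antisymmetry oriented by `<`, so that `simp` normalizes without looping.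
  have hlt : ∀ u v : Fin 4, v < u → Ep g ν p u v = -Ep g ν p v u :=
    fun u v _ => Ep_antisymm g ν hp u v
  intro i j hij
  simp only [Etilde, map_add, map_mul, rename_Ep]
  fin_cases i <;> fin_cases j <;>
    simp (disch := decide) [Equiv.swap_apply_of_ne_of_ne, hlt] at hij ⊢ <;> ring

lemma det_vandermonde_X_fin_four (R : Type*) [CommRing R] :
    (Matrix.vandermonde (X : Fin 4 → MvPolynomial (Fin 4) R)).det =
      (X 1 - X 0) * (X 2 - X 1) * (X 2 - X 0) * (X 3 - X 2) * (X 3 - X 1) * (X 3 - X 0) := by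
  rw [Matrix.det_vandermonde]
  simp [Fin.prod_univ_four, show Finset.Ioi (0 : Fin 4) = {1, 2, 3} by decide,
    show Finset.Ioi (1 : Fin 4) = {2, 3} by decide, show Finset.Ioi (2 : Fin 4) = {3} by decide,
    show Finset.Ioi (3 : Fin 4) = ∅ by decide]
  ring

theorem stmt_6_general (g : ℕ) (ν : ℤ → ℂ)
    (p : Fin g → Fin g → ℂ) (hp : ∀ i j, p i j = p j i) :
    ∃ Q : MvPolynomial (Fin 4) ℂ,
      Ep g ν p 1 2 * Ep g ν p 3 0 + Ep g ν p 2 0 * Ep g ν p 3 1 + Ep g ν p 0 1 * Ep g ν p 3 2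
        = (X 1 - X 0) * (X 2 - X 1) * (X 2 - X 0) *
            (X 3 - X 2) * (X 3 - X 1) * (X 3 - X 0) * Q ∧
      ∀ π : Equiv.Perm (Fin 4), MvPolynomial.rename ⇑π Q = Q := by
  have hE := isAlternating_Etilde g ν hp
  obtain ⟨Q, hQ⟩ := hE.det_vandermonde_dvd
  have hV0 : (Matrix.vandermonde (X : Fin 4 → MvPolynomial (Fin 4) ℂ)).det ≠ 0 :=
    Matrix.det_vandermonde_ne_zero_iff.mpr X_injective
  rw [hQ] at hE
  rw [det_vandermonde_X_fin_four] at hQ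
  exact ⟨Q, hQ, (isAlternating_det_vandermonde 4).isSymmetric_of_mul hV0 hE⟩

/-- `Ẽ = E(e₂,e₃)E(e₄,e₁) + E(e₃,e₁)E(e₄,e₂) + E(e₁,e₂)E(e₄,e₃)` is divisible by
`(e₂-e₁)(e₃-e₂)(e₃-e₁)(e₄-e₃)(e₄-e₂)(e₄-e₁)` and the quotient is symmetric in `e₁,e₂,e₃,e₄`. -/
theorem stmt_6 (g : ℕ) (hg : 1 ≤ g) (ν : ℤ → ℂ) (hν0 : ν 0 ≠ 0) (hνm2 : ν (-2) = 0)
    (p : Fin g → Fin g → ℂ) (hp : ∀ i j, p i j = p j i) :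
    ∃ Q : MvPolynomial (Fin 4) ℂ,
      Ep g ν p 1 2 * Ep g ν p 3 0 + Ep g ν p 2 0 * Ep g ν p 3 1 + Ep g ν p 0 1 * Ep g ν p 3 2
        = (X 1 - X 0) * (X 2 - X 1) * (X 2 - X 0) *
            (X 3 - X 2) * (X 3 - X 1) * (X 3 - X 0) * Q ∧
      ∀ π : Equiv.Perm (Fin 4), MvPolynomial.rename ⇑π Q = Q :=
  stmt_6_general g ν p hp
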